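/- For the action of Aff₀(ℝ) × A on SL(2,ℝ) by (g, Aₜ)·x = g x Aₜ⁻¹: two points p, p' ∈ SL(2,ℝ) with p₂₁p₂₂ ≠ 0 and p'₂₁p'₂₂ ≠ 0 lie in the same orbit if and only if p₂₁p'₂₁ > 0 and p₂₂p'₂₂ > 0; consequently the set {x ∈ SL(2,ℝ) : x₂₁x₂₂ ≠ 0} is a union of exactly four orbits, each open in SL(2,ℝ). -/

import Mathlib

open Matrix

noncomputable section

local notation "M2" => Matrix (Fin 2) (Fin 2) ℝ
local notation "SL2" => Matrix.SpecialLinearGroup (Fin 2) ℝ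

instance : TopologicalSpace SL2 :=
  inferInstanceAs (TopologicalSpace {A : M2 // A.det = 1})

/-- Aₜ = diag(eᵗ, e⁻ᵗ) -/
def Am (t : ℝ) : M2 := !![Real.exp t, 0; 0, Real.exp (-t)]
/-- F_{t,s} = diag(eᵗ, e⁻ᵗ) + sE₁₂ -/
def Fm (t s : ℝ) : M2 := !![Real.exp t, s; 0, Real.exp (-t)]

/-- The orbit of `x` under the action of `Aff₀(ℝ) × A` on SL(2,ℝ),
`(F_{t,s}, A_u)·x = F_{t,s} x A_u⁻¹`. -/
def orbitFA (x : SL2) : Set SL2 :=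
  {y | ∃ t s u : ℝ, Fm t s * (x : M2) * (Am u)⁻¹ = (y : M2)}

/-!
The action rescales the second row `(x₂₁, x₂₂)` of `x` by `(e^{-t-u}, e^{-t+u})`, and every
pair of positive factors arises this way. Two matrices of determinant one with the same second
row differ by a unipotent upper-triangular factor on the left, which `Aff₀(ℝ)` absorbs. So the
orbit of a point with `x₂₁x₂₂ ≠ 0` is the set of points whose second row has the same signs:
four cells, each cut out by two strict inequalities.
-/

theorem Matrix.exists_eq_unitriangular_mul_of_det_eq_one {R : Type*} [CommRing R]
    {M N : Matrix (Fin 2) (Fin 2) R} (hM : M.det = 1) (hN : N.det = 1)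
    (h₀ : N 1 0 = M 1 0) (h₁ : N 1 1 = M 1 1) :
    ∃ s, N = !![1, s; 0, 1] * M := by
  rw [det_fin_two] at hM hN
  refine ⟨N 0 1 * M 0 0 - N 0 0 * M 0 1, ?_⟩
  rw [eta_fin_two M, eta_fin_two N, mul_fin_two]
  ext i j
  fin_cases i <;> fin_cases j <;> simp
  · linear_combination M 0 0 * hN - N 0 0 * hM + (N 0 1 * M 0 0) * h₀ - (N 0 0 * M 0 0) * h₁
  · linear_combination M 0 1 * hN - N 0 1 * hM + (N 0 1 * M 0 1) * h₀ - (N 0 0 * M 0 1) * h₁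
  · exact h₀
  · exact h₁

lemma exists_pos_mul_eq_iff {a b : ℝ} (ha : a ≠ 0) : (∃ c, 0 < c ∧ b = c * a) ↔ 0 < a * b := by
  constructor
  · rintro ⟨c, hc, rfl⟩
    nlinarith [mul_self_pos.2 ha]
  · intro hab
    refine ⟨b / a, ?_, by field_simp⟩
    rw [show b / a = a * b / (a * a) by field_simp]
    exact div_pos hab (mul_self_pos.2 ha)

lemma pos_mul_of_pos_mul_of_pos_mul {a b c : ℝ} (hab : 0 < a * b) (hcb : 0 < c * b) :
    0 < a * c :=
  pos_of_mul_pos_left (show 0 < a * c * (b * b) by nlinarith) (mul_self_nonneg b)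

lemma Am_inv (u : ℝ) : (Am u)⁻¹ = Am (-u) := by
  apply inv_eq_right_inv
  ext i j
  fin_cases i <;> fin_cases j <;> simp [Am, ← Real.exp_add]

lemma det_Fm (t s : ℝ) : (Fm t s).det = 1 := by
  simp [Fm, det_fin_two, ← Real.exp_add]

lemma det_Am_inv (u : ℝ) : ((Am u)⁻¹).det = 1 := by
  rw [Am_inv]
  simp [Am, det_fin_two, ← Real.exp_add]

lemma unitriangular_mul_Fm (s t : ℝ) : !![1, s; 0, 1] * Fm t 0 = Fm t (s * Real.exp (-t)) := by
  ext i j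
  fin_cases i <;> fin_cases j <;> simp [Fm]

lemma Fm_mul_mul_Am_inv_one_zero (t s u : ℝ) (x : M2) :
    (Fm t s * x * (Am u)⁻¹) 1 0 = Real.exp (-t) * Real.exp (-u) * x 1 0 := by
  rw [Am_inv, eta_fin_two x]
  simp [Am, Fm]
  ring

lemma Fm_mul_mul_Am_inv_one_one (t s u : ℝ) (x : M2) :
    (Fm t s * x * (Am u)⁻¹) 1 1 = Real.exp (-t) * Real.exp u * x 1 1 := by
  rw [Am_inv, eta_fin_two x]
  simp [Am, Fm]
  ring

theorem mem_orbitFA_iff {x y : SL2} :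
    y ∈ orbitFA x ↔ ∃ c d : ℝ, 0 < c ∧ 0 < d ∧
      (y : M2) 1 0 = c * (x : M2) 1 0 ∧ (y : M2) 1 1 = d * (x : M2) 1 1 := by
  constructor
  · rintro ⟨t, s, u, hy⟩
    rw [← hy]
    exact ⟨_, _, by positivity, by positivity,
      Fm_mul_mul_Am_inv_one_zero t s u x, Fm_mul_mul_Am_inv_one_one t s u x⟩
  · rintro ⟨c, d, hc, hd, h₀, h₁⟩
    set t := -(Real.log c + Real.log d) / 2
    set u := (Real.log d - Real.log c) / 2
    have hexp₀ : Real.exp (-t) * Real.exp (-u) = c := by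
      rw [← Real.exp_add, show -t + -u = Real.log c by ring, Real.exp_log hc]
    have hexp₁ : Real.exp (-t) * Real.exp u = d := by
      rw [← Real.exp_add, show -t + u = Real.log d by ring, Real.exp_log hd]
    obtain ⟨s, hs⟩ := exists_eq_unitriangular_mul_of_det_eq_one
      (M := Fm t 0 * (x : M2) * (Am u)⁻¹) (N := (y : M2))
      (by rw [det_mul, det_mul, det_Fm, det_Am_inv, x.2]; ring) y.2
      (by rw [Fm_mul_mul_Am_inv_one_zero, hexp₀, h₀])
      (by rw [Fm_mul_mul_Am_inv_one_one, hexp₁, h₁])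
    refine ⟨t, s * Real.exp (-t), u, ?_⟩
    rw [hs, ← unitriangular_mul_Fm, Matrix.mul_assoc, Matrix.mul_assoc, Matrix.mul_assoc]

def signCell (a b : ℝ) : Set SL2 :=
  {x | 0 < a * (x : M2) 1 0 ∧ 0 < b * (x : M2) 1 1}

theorem orbitFA_eq_signCell {z : SL2} (h₀ : (z : M2) 1 0 ≠ 0) (h₁ : (z : M2) 1 1 ≠ 0) :
    orbitFA z = signCell ((z : M2) 1 0) ((z : M2) 1 1) := by
  ext y
  rw [mem_orbitFA_iff, signCell, Set.mem_ofPred_eq, ← exists_pos_mul_eq_iff h₀,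
    ← exists_pos_mul_eq_iff h₁]
  exact ⟨fun ⟨c, d, hc, hd, hy₀, hy₁⟩ => ⟨⟨c, hc, hy₀⟩, ⟨d, hd, hy₁⟩⟩,
    fun ⟨⟨c, hc, hy₀⟩, ⟨d, hd, hy₁⟩⟩ => ⟨c, d, hc, hd, hy₀, hy₁⟩⟩

theorem isOpen_signCell (a b : ℝ) : IsOpen (signCell a b) := by
  have hcont : ∀ i j, Continuous fun x : SL2 => (x : M2) i j := fun i j =>
    continuous_subtype_val.matrix_elem i j
  exact (isOpen_lt continuous_const (continuous_const.mul (hcont 1 0))).and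
    (isOpen_lt continuous_const (continuous_const.mul (hcont 1 1)))

lemma mul_ne_zero_of_mem_signCell {a b : ℝ} {x : SL2} (hx : x ∈ signCell a b) :
    (x : M2) 1 0 * (x : M2) 1 1 ≠ 0 :=
  mul_ne_zero (right_ne_zero_of_mul hx.1.ne') (right_ne_zero_of_mul hx.2.ne')

theorem disjoint_signCell {a b a' b' : ℝ} (h : ¬(0 < a * a' ∧ 0 < b * b')) :
    Disjoint (signCell a b) (signCell a' b') :=
  Set.disjoint_left.2 fun _ ⟨hx₀, hx₁⟩ ⟨hx₀', hx₁'⟩ =>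
    h ⟨pos_mul_of_pos_mul_of_pos_mul hx₀ hx₀', pos_mul_of_pos_mul_of_pos_mul hx₁ hx₁'⟩

/-- For the action of `Aff₀(ℝ) × A` on SL(2,ℝ): points `p, p'` with
`p₂₁p₂₂ ≠ 0 ≠ p'₂₁p'₂₂` lie in the same orbit iff `p₂₁p'₂₁ > 0` and `p₂₂p'₂₂ > 0`;
consequently `{x : x₂₁x₂₂ ≠ 0}` is the union of exactly four orbits, each open. -/
theorem AffA_open_orbits :
    (∀ p p' : SL2, (p : M2) 1 0 * (p : M2) 1 1 ≠ 0 → (p' : M2) 1 0 * (p' : M2) 1 1 ≠ 0 →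
      (p' ∈ orbitFA p ↔
        0 < (p : M2) 1 0 * (p' : M2) 1 0 ∧ 0 < (p : M2) 1 1 * (p' : M2) 1 1)) ∧
    ∃ q : Fin 4 → SL2,
      (⋃ i, orbitFA (q i)) = {x : SL2 | (x : M2) 1 0 * (x : M2) 1 1 ≠ 0} ∧
      (∀ i j, i ≠ j → Disjoint (orbitFA (q i)) (orbitFA (q j))) ∧
      ∀ i, IsOpen (orbitFA (q i)) := by
  refine ⟨fun p p' hp _ => ?_, ?_⟩
  · obtain ⟨h₀, h₁⟩ := mul_ne_zero_iff.1 hp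
    rw [orbitFA_eq_signCell h₀ h₁]
    rfl
  let q : Fin 4 → SL2 :=
    ![⟨!![0, -1; 1, 1], by norm_num [det_fin_two]⟩,
      ⟨!![0, -1; 1, -1], by norm_num [det_fin_two]⟩,
      ⟨!![0, 1; -1, 1], by norm_num [det_fin_two]⟩,
      ⟨!![0, 1; -1, -1], by norm_num [det_fin_two]⟩]
  have hq : ∀ i, orbitFA (q i) = signCell ((q i : M2) 1 0) ((q i : M2) 1 1) := fun i =>
    orbitFA_eq_signCell (by fin_cases i <;> simp [q]) (by fin_cases i <;> simp [q])
  refine ⟨q, ?_, fun i j hij => ?_, fun i => hq i ▸ isOpen_signCell _ _⟩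
  · ext x
    simp only [Set.mem_iUnion, hq]
    refine ⟨fun ⟨i, hi⟩ => mul_ne_zero_of_mem_signCell hi, fun hx => ?_⟩
    obtain ⟨h₀, h₁⟩ := mul_ne_zero_iff.1 hx
    rcases h₀.lt_or_gt with h₀ | h₀ <;> rcases h₁.lt_or_gt with h₁ | h₁
    · exact ⟨3, by simp [q, signCell, h₀, h₁]⟩
    · exact ⟨2, by simp [q, signCell, h₀, h₁]⟩
    · exact ⟨1, by simp [q, signCell, h₀, h₁]⟩
    · exact ⟨0, by simp [q, signCell, h₀, h₁]⟩
  · rw [hq, hq]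
    apply disjoint_signCell
    fin_cases i <;> fin_cases j <;> simp [q] at hij ⊢
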